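/- arXiv:2503.07156 — 5 statements merged into one kernel-verified Lean document; each statement's English description precedes it below -/
import Mathlib

section
/- Let α, β > 0 with α ≤ β and β - α < 2(α+3). Define q(p) = p + α(p-1), r(p) = p + β(p-1), and p⁰ = 1 + 4/(β - 3α - 2) if β - α > 2(α+1), p⁰ = +∞ otherwise. Then for every p with 2 ≤ p < p⁰, one has 0 < (r(p) - 2)·(q(p)+1)/q(p) < r(p) + 1. -/
open Real

theorem critical_inequality (α β p : ℝ) (hα : 0 < α) (hβ : 0 < β) (hαβ : α ≤ β)
    (hgap : β - α < 2 * (α + 3)) (hp : 2 ≤ p)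
    (hp' : 2 * (α + 1) < β - α → p < 1 + 4 / (β - 3 * α - 2)) :
    0 < ((p + β * (p - 1)) - 2) * ((p + α * (p - 1)) + 1) / (p + α * (p - 1)) ∧
    ((p + β * (p - 1)) - 2) * ((p + α * (p - 1)) + 1) / (p + α * (p - 1))
      < (p + β * (p - 1)) + 1 := by
  have hq : 0 < p + α * (p - 1) := by nlinarith
  constructor
  · apply div_pos _ hq
    have h1 : 0 < (p + β * (p - 1)) - 2 := by nlinarith
    nlinarith
  · rw [div_lt_iff₀ hq]
    -- reduces to (β - 3α - 2)(p-1) < 4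
    have key : (β - 3 * α - 2) * (p - 1) < 4 := by
      rcases le_or_gt (β - 3 * α - 2) 0 with h | h
      · nlinarith
      · have h2 : 2 * (α + 1) < β - α := by linarith
        have h3 := hp' h2
        have h4 : p - 1 < 4 / (β - 3 * α - 2) := by linarith
        have h5 := (lt_div_iff₀ h).mp h4
        linarith
    nlinarith
end

section
/- Under the hypotheses of the slow-manifold solvability (α, β > 0, A > 0, B ≥ 0 with B > 0 if β < 1, power-law ψ, φ), the map (u_a*, u_b*) : ℝ₊² → ℝ₊² assigning to (ũ, ṽ) the unique nonnegative solution of u_a* + u_b* = ũ and q(u_a*, u_b*, ṽ) = 0 is continuously differentiable on (0,∞)², and its partial derivatives with respect to ũ satisfy ∂_ũ u_a*(ũ,ṽ) ∈ (0,1) and ∂_ũ u_b*(ũ,ṽ) ∈ (0,1). -/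
/-!
Write `P y = φ(b' y + d' v) y` and `N x = ψ(a' x + c' v) x`, so that `q(x, u - x, v) = 0` says
that the flux `N x` balances `P (u - x)`. Both fluxes vanish at `0`, `P` is nondecreasing and `N`
strictly increasing, so the intermediate value theorem gives exactly one balance point
`x = u_a*(u, v)` in `[0, u]`, and it lies in `(0, u)` when `u, v > 0`. There
`∂ₓ (P (u - x) - N x) = -(P' + N') < 0`, so the implicit function theorem makes `u_a*` smooth, and
differentiating `P (u - u_a*) = N u_a*` in `u` gives `∂ᵤ u_a* = P' / (P' + N') ∈ (0, 1)`; finally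
`u_b* = u - u_a*`.
-/

open Set Filter Topology Function
open scoped ContDiff

theorem contDiffAt_of_locally_unique_root {𝕜 E : Type*} [RCLike 𝕜] [NormedAddCommGroup E]
    [NormedSpace 𝕜 E] [CompleteSpace E] {f : E × 𝕜 → 𝕜} {g : E → 𝕜} {p : E} {c : 𝕜}
    {n : WithTop ℕ∞} (hf : ContDiffAt 𝕜 n f (p, g p)) (hn : n ≠ 0)
    (hfx : HasDerivAt (fun x => f (p, x)) c (g p)) (hc : c ≠ 0) (hroot : f (p, g p) = 0)
    (huniq : ∀ᶠ w in 𝓝 (p, g p), f w = 0 → w.2 = g w.1) :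
    ContDiffAt 𝕜 n g p := by
  have hslice : (fderiv 𝕜 f (p, g p) ∘L .inr 𝕜 E 𝕜) 1 = c := by
    have hcurve : HasDerivAt (fun x : 𝕜 => (p, x)) ((0 : E), (1 : 𝕜)) (g p) :=
      (hasDerivAt_const _ p).prodMk (hasDerivAt_id _)
    exact ((hf.differentiableAt hn).hasFDerivAt.comp_hasDerivAt (g p) hcurve).unique hfx
  have hinv : (fderiv 𝕜 f (p, g p) ∘L .inr 𝕜 E 𝕜).IsInvertible :=
    ⟨ContinuousLinearEquiv.unitsEquivAut 𝕜 (Units.mk0 c hc),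
      ContinuousLinearMap.ext_ring (by simp [hslice])⟩
  have hψ := hf.contDiffAt_implicitFunction hn hinv
  have hgraph : Tendsto (fun x => (x, hf.implicitFunction hn hinv x)) (𝓝 p) (𝓝 (p, g p)) := by
    simpa [hf.implicitFunction_apply_self hn hinv] using
      (continuousAt_id.prodMk hψ.continuousAt).tendsto
  refine hψ.congr_of_eventuallyEq ?_
  filter_upwards [hf.eventually_apply_implicitFunction hn hinv, hgraph.eventually huniq]
    with x hx hxu
  exact (hxu (hx.trans hroot)).symm

theorem exists_balance {P N : ℝ → ℝ} {u : ℝ} (hu : 0 ≤ u) (hP : ContinuousOn P (Icc 0 u))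
    (hN : ContinuousOn N (Icc 0 u)) (h₀ : N 0 ≤ P u) (h₁ : P 0 ≤ N u) :
    ∃ x ∈ Icc 0 u, P (u - x) = N x := by
  have hmaps : MapsTo (fun x => u - x) (Icc 0 u) (Icc 0 u) :=
    fun x hx => ⟨by linarith [hx.2], by linarith [hx.1]⟩
  have hcont : ContinuousOn (fun x => P (u - x) - N x) (Icc 0 u) :=
    (hP.comp (continuousOn_const.sub continuousOn_id) hmaps).sub hN
  obtain ⟨x, hx, hx0⟩ := intermediate_value_Icc' hu hcont
    (show P (u - u) - N u ≤ 0 ∧ 0 ≤ P (u - 0) - N 0 by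
      rw [sub_self, sub_zero]; constructor <;> linarith)
  exact ⟨x, hx, sub_eq_zero.1 hx0⟩

theorem balance_unique {P N : ℝ → ℝ} {u x y : ℝ} (hP : MonotoneOn P (Icc 0 u))
    (hN : StrictMonoOn N (Icc 0 u)) (hx : x ∈ Icc 0 u) (hy : y ∈ Icc 0 u)
    (hbx : P (u - x) = N x) (hby : P (u - y) = N y) : x = y := by
  have hanti : StrictAntiOn (fun x => P (u - x) - N x) (Icc 0 u) := by
    intro x hx y hy hxy
    have hPxy := hP ⟨by linarith [hy.2], by linarith [hy.1]⟩
      ⟨by linarith [hx.2], by linarith [hx.1]⟩ (by linarith : u - y ≤ u - x)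
    have hNxy := hN hx hy hxy
    simp only
    linarith
  exact hanti.injOn hx hy (by simp only [hbx, hby, sub_self])

/-- The paper's `u_a*(ũ, ṽ)` at `p = (ũ, ṽ)`, when `q(x, y, v) = P y v - N x v`. -/
noncomputable def balancePoint (P N : ℝ → ℝ → ℝ) (p : ℝ × ℝ) : ℝ :=
  Classical.epsilon fun x => x ∈ Icc 0 p.1 ∧ P (p.1 - x) p.2 = N x p.2

theorem balancePoint_spec {P N : ℝ → ℝ → ℝ} {p : ℝ × ℝ} (hu : 0 ≤ p.1)
    (hPc : ContinuousOn (P · p.2) (Icc 0 p.1)) (hNc : ContinuousOn (N · p.2) (Icc 0 p.1))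
    (hPm : MonotoneOn (P · p.2) (Icc 0 p.1)) (hNm : StrictMonoOn (N · p.2) (Icc 0 p.1))
    (h₀ : N 0 p.2 ≤ P p.1 p.2) (h₁ : P 0 p.2 ≤ N p.1 p.2) :
    balancePoint P N p ∈ Icc 0 p.1 ∧
      ∀ x ∈ Icc 0 p.1, P (p.1 - x) p.2 = N x p.2 ↔ x = balancePoint P N p := by
  obtain ⟨hmem, hbal⟩ : balancePoint P N p ∈ Icc 0 p.1 ∧
      P (p.1 - balancePoint P N p) p.2 = N (balancePoint P N p) p.2 :=
    Classical.epsilon_spec (exists_balance hu hPc hNc h₀ h₁)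
  refine ⟨hmem, fun x hx => ⟨fun hx' => balance_unique hPm hNm hx hmem hx' hbal, ?_⟩⟩
  rintro rfl
  exact hbal

theorem contDiffAt_balancePoint {P N : ℝ → ℝ → ℝ} {p : ℝ × ℝ} {x dP dN : ℝ} {n : WithTop ℕ∞}
    (hx : x ∈ Ioo 0 p.1) (hbal : P (p.1 - x) p.2 = N x p.2)
    (huniq : ∀ᶠ p' in 𝓝 p, ∀ y ∈ Icc 0 p'.1, P (p'.1 - y) p'.2 = N y p'.2 →
      y = balancePoint P N p')
    (hP : ContDiffAt ℝ n (uncurry P) (p.1 - x, p.2)) (hN : ContDiffAt ℝ n (uncurry N) (x, p.2))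
    (hP' : HasDerivAt (P · p.2) dP (p.1 - x)) (hN' : HasDerivAt (N · p.2) dN x)
    (hd : dP + dN ≠ 0) (hn : n ≠ 0) :
    ContDiffAt ℝ n (balancePoint P N) p := by
  have hxp : balancePoint P N p = x :=
    (huniq.self_of_nhds x (Ioo_subset_Icc_self hx) hbal).symm
  subst hxp
  set f : (ℝ × ℝ) × ℝ → ℝ := fun w => P (w.1.1 - w.2) w.1.2 - N w.2 w.1.2
  have hf : ContDiffAt ℝ n f (p, balancePoint P N p) := by
    have hPw : ContDiffAt ℝ n (fun w : (ℝ × ℝ) × ℝ => (w.1.1 - w.2, w.1.2))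
        (p, balancePoint P N p) := by fun_prop
    have hNw : ContDiffAt ℝ n (fun w : (ℝ × ℝ) × ℝ => (w.2, w.1.2))
        (p, balancePoint P N p) := by fun_prop
    exact (hP.comp (f := fun w : (ℝ × ℝ) × ℝ => (w.1.1 - w.2, w.1.2)) _ hPw).sub
      (hN.comp (f := fun w : (ℝ × ℝ) × ℝ => (w.2, w.1.2)) _ hNw)
  have hfx : HasDerivAt (fun y => f (p, y)) (-(dP + dN)) (balancePoint P N p) := by
    have := (hP'.comp _ ((hasDerivAt_id _).const_sub p.1)).sub hN'
    rw [mul_neg_one, ← neg_add'] at this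
    exact this
  refine contDiffAt_of_locally_unique_root hf hn hfx (neg_ne_zero.2 hd) (sub_eq_zero.2 hbal) ?_
  have hinterior : ∀ᶠ w in 𝓝 (p, balancePoint P N p), 0 < w.2 ∧ w.2 < w.1.1 :=
    ((isOpen_lt continuous_const continuous_snd).inter
      (isOpen_lt continuous_snd (continuous_fst.comp continuous_fst))).mem_nhds hx
  filter_upwards [hinterior, continuous_fst.continuousAt.eventually huniq] with w hw hwu hfw
  exact hwu w.2 ⟨hw.1.le, hw.2.le⟩ (sub_eq_zero.1 hfw)

theorem hasDerivAt_of_eventually_balance {P N h : ℝ → ℝ} {t dP dN : ℝ}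
    (hh : DifferentiableAt ℝ h t) (hbal : ∀ᶠ s in 𝓝 t, P (s - h s) = N (h s))
    (hP : HasDerivAt P dP (t - h t)) (hN : HasDerivAt N dN (h t)) (hd : dP + dN ≠ 0) :
    HasDerivAt h (dP / (dP + dN)) t := by
  have hk := hh.hasDerivAt
  have hcomp := (hP.comp t ((hasDerivAt_id t).sub hk)).sub (hN.comp t hk)
  have hzero : HasDerivAt (fun s => P (s - h s) - N (h s)) 0 t :=
    (hasDerivAt_const t 0).congr_of_eventuallyEq (hbal.mono fun s hs => sub_eq_zero.2 hs)
  have hkey := hcomp.unique hzero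
  rwa [show deriv h t = dP / (dP + dN) by rw [eq_div_iff hd]; linarith] at hk

/-- The term `ψ(a x + c v) x` of `q` for the power law `ψ(s) = (K + s)^γ`, so that
`q u_a u_b v = powerFlux B β b' d' u_b v - powerFlux A α a' c' u_a v`. -/
noncomputable def powerFlux (K γ a c x v : ℝ) : ℝ := (K + (a * x + c * v)) ^ γ * x

section powerFlux

variable {K γ a c x v : ℝ}

@[simp] theorem powerFlux_zero : powerFlux K γ a c 0 v = 0 := by simp [powerFlux]

theorem powerFlux_nonneg (hK : 0 ≤ K) (ha : 0 ≤ a) (hc : 0 ≤ c) (hx : 0 ≤ x) (hv : 0 ≤ v) :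
    0 ≤ powerFlux K γ a c x v :=
  mul_nonneg (Real.rpow_nonneg (by positivity) _) hx

theorem powerFlux_pos (hbase : 0 < K + (a * x + c * v)) (hx : 0 < x) :
    0 < powerFlux K γ a c x v :=
  mul_pos (Real.rpow_pos_of_pos hbase _) hx

theorem continuous_powerFlux (hγ : 0 < γ) : Continuous (powerFlux K γ a c · v) :=
  ((Real.continuous_rpow_const hγ.le).comp (by fun_prop)).mul continuous_id

theorem monotoneOn_powerFlux (hK : 0 ≤ K) (hγ : 0 ≤ γ) (ha : 0 ≤ a) (hc : 0 ≤ c) (hv : 0 ≤ v) :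
    MonotoneOn (powerFlux K γ a c · v) (Ici 0) := by
  intro x (hx : 0 ≤ x) y (hy : 0 ≤ y) hxy
  exact mul_le_mul (Real.rpow_le_rpow (by positivity) (by gcongr) hγ)
    hxy hx (Real.rpow_nonneg (by positivity) _)

theorem strictMonoOn_powerFlux (hK : 0 < K) (hγ : 0 ≤ γ) (ha : 0 ≤ a) (hc : 0 ≤ c)
    (hv : 0 ≤ v) : StrictMonoOn (powerFlux K γ a c · v) (Ici 0) := by
  intro x (hx : 0 ≤ x) y (hy : 0 ≤ y) hxy
  calc powerFlux K γ a c x v ≤ (K + (a * y + c * v)) ^ γ * x :=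
        mul_le_mul_of_nonneg_right (Real.rpow_le_rpow (by positivity) (by gcongr) hγ) hx
    _ < powerFlux K γ a c y v := mul_lt_mul_of_pos_left hxy (by positivity)

theorem exists_pos_hasDerivAt_powerFlux (hγ : 0 ≤ γ) (ha : 0 ≤ a) (hx : 0 ≤ x)
    (hbase : 0 < K + (a * x + c * v)) : ∃ d, 0 < d ∧ HasDerivAt (powerFlux K γ a c · v) d x := by
  have hinner : HasDerivAt (fun y => K + (a * y + c * v)) a x := by
    simpa using ((hasDerivAt_id x).const_mul a).add_const (c * v) |>.const_add K
  refine ⟨_, ?_, (hinner.rpow_const (p := γ) (Or.inl hbase.ne')).mul (hasDerivAt_id' x)⟩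
  have := Real.rpow_pos_of_pos hbase γ
  have := Real.rpow_nonneg hbase.le (γ - 1)
  positivity

theorem contDiffAt_powerFlux {n : WithTop ℕ∞} (hbase : 0 < K + (a * x + c * v)) :
    ContDiffAt ℝ n (uncurry (powerFlux K γ a c)) (x, v) := by
  have hinner : ContDiffAt ℝ n (fun w : ℝ × ℝ => K + (a * w.1 + c * w.2)) (x, v) := by fun_prop
  exact (hinner.rpow_const_of_ne hbase.ne').mul contDiffAt_fst

end powerFlux

theorem add_mul_add_mul_pos {K a c x v : ℝ} (hK : 0 ≤ K) (ha : 0 ≤ a) (hc : 0 ≤ c)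
    (hac : (a, c) ≠ (0, 0)) (hx : 0 < x) (hv : 0 < v) : 0 < K + (a * x + c * v) := by
  rcases ha.lt_or_eq with ha | rfl
  · positivity
  · have hc : 0 < c := hc.lt_of_ne fun h => hac (by rw [← h])
    positivity

section slowManifold

variable {α β A B a' b' c' d' : ℝ}

local notation "uₐ*" => balancePoint (powerFlux B β b' d') (powerFlux A α a' c')

theorem balancePoint_powerFlux_spec (hα : 0 < α) (hβ : 0 < β) (hA : 0 < A) (hB : 0 ≤ B)
    (ha' : 0 ≤ a') (hb' : 0 ≤ b') (hc' : 0 ≤ c') (hd' : 0 ≤ d') {p : ℝ × ℝ} (hu : 0 ≤ p.1)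
    (hv : 0 ≤ p.2) :
    uₐ* p ∈ Icc 0 p.1 ∧
      ∀ x ∈ Icc 0 p.1, powerFlux B β b' d' (p.1 - x) p.2 = powerFlux A α a' c' x p.2 ↔ x = uₐ* p :=
  balancePoint_spec hu (continuous_powerFlux hβ).continuousOn (continuous_powerFlux hα).continuousOn
    ((monotoneOn_powerFlux hB hβ.le hb' hd' hv).mono Icc_subset_Ici_self)
    ((strictMonoOn_powerFlux hA hα.le ha' hc' hv).mono Icc_subset_Ici_self)
    (by rw [powerFlux_zero]; exact powerFlux_nonneg hB hb' hd' hu hv)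
    (by rw [powerFlux_zero]; exact powerFlux_nonneg hA.le ha' hc' hu hv)

theorem balancePoint_powerFlux_mem_Ioo (hα : 0 < α) (hβ : 0 < β) (hA : 0 < A) (hB : 0 ≤ B)
    (ha' : 0 ≤ a') (hb' : 0 ≤ b') (hc' : 0 ≤ c') (hd' : 0 ≤ d') (hbd : (b', d') ≠ (0, 0))
    {p : ℝ × ℝ} (hu : 0 < p.1) (hv : 0 < p.2) : uₐ* p ∈ Ioo 0 p.1 := by
  obtain ⟨⟨hx₀, hx₁⟩, hiff⟩ :=
    balancePoint_powerFlux_spec hα hβ hA hB ha' hb' hc' hd' hu.le hv.le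
  set x := uₐ* p
  have hbal := (hiff x ⟨hx₀, hx₁⟩).2 rfl
  refine ⟨hx₀.lt_of_ne ?_, hx₁.lt_of_ne ?_⟩
  · intro hx
    rw [← hx, sub_zero, powerFlux_zero] at hbal
    exact (powerFlux_pos (add_mul_add_mul_pos hB hb' hd' hbd hu hv) hu).ne' hbal
  · intro hx
    rw [hx, sub_self, powerFlux_zero] at hbal
    exact (powerFlux_pos (by positivity) hu).ne hbal

theorem contDiffAt_balancePoint_powerFlux (hα : 0 < α) (hβ : 0 < β) (hA : 0 < A) (hB : 0 ≤ B)
    (ha' : 0 ≤ a') (hb' : 0 ≤ b') (hc' : 0 ≤ c') (hd' : 0 ≤ d') (hbd : (b', d') ≠ (0, 0))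
    {p : ℝ × ℝ} (hu : 0 < p.1) (hv : 0 < p.2) :
    ContDiffAt ℝ ω (uₐ*) p := by
  have hx := balancePoint_powerFlux_mem_Ioo hα hβ hA hB ha' hb' hc' hd' hbd hu hv
  have hbal := ((balancePoint_powerFlux_spec hα hβ hA hB ha' hb' hc' hd' hu.le hv.le).2 _
    (Ioo_subset_Icc_self hx)).2 rfl
  set x := uₐ* p
  have hbaseP := add_mul_add_mul_pos hB hb' hd' hbd (sub_pos.2 hx.2) hv
  have hbaseN : 0 < A + (a' * x + c' * p.2) := by have := hx.1; positivity
  obtain ⟨dP, hdP, hP'⟩ := exists_pos_hasDerivAt_powerFlux hβ.le hb' (sub_pos.2 hx.2).le hbaseP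
  obtain ⟨dN, hdN, hN'⟩ := exists_pos_hasDerivAt_powerFlux hα.le ha' hx.1.le hbaseN
  have huniq : ∀ᶠ p' in 𝓝 p, ∀ y ∈ Icc 0 p'.1,
      powerFlux B β b' d' (p'.1 - y) p'.2 = powerFlux A α a' c' y p'.2 → y = uₐ* p' := by
    filter_upwards [(isOpen_Ioi.prod isOpen_Ioi).mem_nhds ⟨hu, hv⟩] with p' hp'
    exact fun y hy => ((balancePoint_powerFlux_spec hα hβ hA hB ha' hb' hc' hd'
      (le_of_lt hp'.1) (le_of_lt hp'.2)).2 y hy).1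
  exact contDiffAt_balancePoint hx hbal huniq (contDiffAt_powerFlux hbaseP)
    (contDiffAt_powerFlux hbaseN) hP' hN' (by positivity) (by simp)

theorem hasDerivAt_balancePoint_powerFlux (hα : 0 < α) (hβ : 0 < β) (hA : 0 < A) (hB : 0 ≤ B)
    (ha' : 0 ≤ a') (hb' : 0 ≤ b') (hc' : 0 ≤ c') (hd' : 0 ≤ d') (hbd : (b', d') ≠ (0, 0))
    {u v : ℝ} (hu : 0 < u) (hv : 0 < v) :
    ∃ k ∈ Ioo (0 : ℝ) 1, HasDerivAt (fun t => uₐ* (t, v)) k u := by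
  have hx := balancePoint_powerFlux_mem_Ioo hα hβ hA hB ha' hb' hc' hd' hbd (p := (u, v)) hu hv
  set x := uₐ* (u, v)
  have hbaseP := add_mul_add_mul_pos hB hb' hd' hbd (sub_pos.2 hx.2) hv
  have hbaseN : 0 < A + (a' * x + c' * v) := by have := hx.1; positivity
  obtain ⟨dP, hdP, hP'⟩ := exists_pos_hasDerivAt_powerFlux hβ.le hb' (sub_pos.2 hx.2).le hbaseP
  obtain ⟨dN, hdN, hN'⟩ := exists_pos_hasDerivAt_powerFlux hα.le ha' hx.1.le hbaseN
  have hdiff : DifferentiableAt ℝ (fun t => uₐ* (t, v)) u :=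
    ((contDiffAt_balancePoint_powerFlux hα hβ hA hB ha' hb' hc' hd' hbd (p := (u, v)) hu hv
      ).differentiableAt (by simp)).comp (f := fun t : ℝ => (t, v)) u (by fun_prop)
  have hbal : ∀ᶠ t in 𝓝 u,
      powerFlux B β b' d' (t - uₐ* (t, v)) v = powerFlux A α a' c' (uₐ* (t, v)) v := by
    filter_upwards [lt_mem_nhds hu] with t ht
    have hspec := balancePoint_powerFlux_spec hα hβ hA hB ha' hb' hc' hd' (p := (t, v)) ht.le hv.le
    exact (hspec.2 _ hspec.1).2 rfl
  refine ⟨dP / (dP + dN), ⟨by positivity, (div_lt_one (by positivity)).2 (by linarith)⟩,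
    hasDerivAt_of_eventually_balance hdiff hbal hP' hN' (by positivity)⟩

end slowManifold

theorem slow_manifold_regularity_general (α β A B a' b' c' d' : ℝ)
    (hα : 0 < α) (hβ : 0 < β) (hA : 0 < A) (hB : 0 ≤ B)
    (ha' : 0 ≤ a') (hb' : 0 ≤ b') (hc' : 0 ≤ c') (hd' : 0 ≤ d')
    (hbd : (b', d') ≠ (0, 0))
    (q : ℝ → ℝ → ℝ → ℝ)
    (hq : ∀ u_a u_b v, q u_a u_b v =
      (B + (b' * u_b + d' * v)) ^ β * u_b - (A + (a' * u_a + c' * v)) ^ α * u_a) :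
    ∃ ua' ub' : ℝ × ℝ → ℝ,
      -- (ua*, ub*) is the unique nonnegative solution of the slow-manifold system
      (∀ p : ℝ × ℝ, 0 ≤ p.1 → 0 ≤ p.2 →
        0 ≤ ua' p ∧ 0 ≤ ub' p ∧ ua' p + ub' p = p.1 ∧ q (ua' p) (ub' p) p.2 = 0 ∧
        ∀ x y : ℝ, 0 ≤ x → 0 ≤ y → x + y = p.1 → q x y p.2 = 0 →
          x = ua' p ∧ y = ub' p) ∧
      -- continuous differentiability on (0,∞)²
      ContDiffOn ℝ 1 ua' (Set.Ioi 0 ×ˢ Set.Ioi 0) ∧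
      ContDiffOn ℝ 1 ub' (Set.Ioi 0 ×ˢ Set.Ioi 0) ∧
      -- the partial derivatives in ũ lie in (0,1)
      (∀ u v : ℝ, 0 < u → 0 < v →
        deriv (fun t => ua' (t, v)) u ∈ Set.Ioo (0 : ℝ) 1 ∧
        deriv (fun t => ub' (t, v)) u ∈ Set.Ioo (0 : ℝ) 1) := by
  set ua := balancePoint (powerFlux B β b' d') (powerFlux A α a' c')
  have hq_eq_zero : ∀ x y v, q x y v = 0 ↔ powerFlux B β b' d' y v = powerFlux A α a' c' x v :=
    fun x y v => by rw [hq, sub_eq_zero]; rfl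
  have hsmooth : ∀ p ∈ Ioi 0 ×ˢ Ioi 0, ContDiffAt ℝ 1 ua p := fun p hp =>
    (contDiffAt_balancePoint_powerFlux hα hβ hA hB ha' hb' hc' hd' hbd hp.1 hp.2).of_le le_top
  refine ⟨ua, fun p => p.1 - ua p, fun p hu hv => ?_, fun p hp => (hsmooth p hp).contDiffWithinAt,
    fun p hp => (contDiffAt_fst.sub (hsmooth p hp)).contDiffWithinAt, fun u v hu hv => ?_⟩
  · obtain ⟨⟨hx₀, hx₁⟩, hiff⟩ := balancePoint_powerFlux_spec hα hβ hA hB ha' hb' hc' hd' hu hv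
    refine ⟨hx₀, sub_nonneg.2 hx₁, add_sub_cancel _ _,
      (hq_eq_zero _ _ _).2 ((hiff _ ⟨hx₀, hx₁⟩).2 rfl), fun x y hx _ hxy hqxy => ?_⟩
    obtain rfl : y = p.1 - x := by linarith
    obtain rfl := (hiff x ⟨hx, by linarith⟩).1 ((hq_eq_zero _ _ _).1 hqxy)
    exact ⟨rfl, rfl⟩
  · obtain ⟨k, hk, hderiv⟩ :=
      hasDerivAt_balancePoint_powerFlux hα hβ hA hB ha' hb' hc' hd' hbd hu hv
    have hderiv_ub : HasDerivAt (fun t => (t, v).1 - ua (t, v)) (1 - k) u :=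
      (hasDerivAt_id' u).sub hderiv
    rw [hderiv.deriv]
    beta_reduce
    rw [hderiv_ub.deriv]
    exact ⟨hk, by linarith [hk.2], by linarith [hk.1]⟩

theorem slow_manifold_regularity (α β A B a' b' c' d' : ℝ)
    (hα : 0 < α) (hβ : 0 < β) (hA : 0 < A) (hB : 0 ≤ B) (hBβ : β < 1 → 0 < B)
    (ha' : 0 ≤ a') (hb' : 0 ≤ b') (hc' : 0 ≤ c') (hd' : 0 ≤ d')
    (hac : (a', c') ≠ (0, 0)) (hbd : (b', d') ≠ (0, 0))
    (q : ℝ → ℝ → ℝ → ℝ)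
    (hq : ∀ u_a u_b v, q u_a u_b v =
      (B + (b' * u_b + d' * v)) ^ β * u_b - (A + (a' * u_a + c' * v)) ^ α * u_a) :
    ∃ ua' ub' : ℝ × ℝ → ℝ,
      -- (ua*, ub*) is the unique nonnegative solution of the slow-manifold system
      (∀ p : ℝ × ℝ, 0 ≤ p.1 → 0 ≤ p.2 →
        0 ≤ ua' p ∧ 0 ≤ ub' p ∧ ua' p + ub' p = p.1 ∧ q (ua' p) (ub' p) p.2 = 0 ∧
        ∀ x y : ℝ, 0 ≤ x → 0 ≤ y → x + y = p.1 → q x y p.2 = 0 →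
          x = ua' p ∧ y = ub' p) ∧
      -- continuous differentiability on (0,∞)²
      ContDiffOn ℝ 1 ua' (Set.Ioi 0 ×ˢ Set.Ioi 0) ∧
      ContDiffOn ℝ 1 ub' (Set.Ioi 0 ×ˢ Set.Ioi 0) ∧
      -- the partial derivatives in ũ lie in (0,1)
      (∀ u v : ℝ, 0 < u → 0 < v →
        deriv (fun t => ua' (t, v)) u ∈ Set.Ioo (0 : ℝ) 1 ∧
        deriv (fun t => ub' (t, v)) u ∈ Set.Ioo (0 : ℝ) 1) :=
  slow_manifold_regularity_general α β A B a' b' c' d' hα hβ hA hB ha' hb' hc' hd' hbd q hq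
end

section
/- Assume additionally a' > 0 and b' > 0. Then the implicit solution map satisfies, for all (ũ, ṽ) ∈ (0,∞)², the bounds -c'/a' ≤ ∂_ṽ u_a*(ũ,ṽ) = -∂_ṽ u_b*(ũ,ṽ) ≤ d'/b'. -/
/-!
Fix `u > 0` and write `g t = u_a*(u, t)`, so that `u_b*(u, t) = u - g t`. Differentiating
`q (g t) (u - g t) t = 0` at `t = v` gives `g'(v) · (∂₂q - ∂₁q) = ∂₃q`. With `s_a`, `s_b` the
(positive) bases of the two powers in `q`, `∂₂q - ∂₁q = P + a' m_a + b' m_b` and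
`∂₃q = d' m_b - c' m_a`, where `P = s_a^α + s_b^β > 0`, `m_a = α s_a^(α-1) u_a ≥ 0` and
`m_b = β s_b^(β-1) u_b ≥ 0`; comparing numerator and denominator termwise gives
`-c'/a' ≤ g'(v) ≤ d'/b'`.
-/

open Real Filter Topology

theorem neg_div_le_and_le_div_of_mul_eq {a b c d ma mb P x : ℝ} (ha : 0 < a) (hb : 0 < b)
    (hc : 0 ≤ c) (hd : 0 ≤ d) (hma : 0 ≤ ma) (hmb : 0 ≤ mb) (hP : 0 < P)
    (hx : x * (P + a * ma + b * mb) = d * mb - c * ma) :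
    -c / a ≤ x ∧ x ≤ d / b := by
  have hD : 0 < P + a * ma + b * mb := by positivity
  constructor
  · refine le_of_mul_le_mul_right ?_ hD
    calc -c / a * (P + a * ma + b * mb)
        ≤ -c / a * (a * ma) := by
          apply mul_le_mul_of_nonpos_left _ (div_nonpos_of_nonpos_of_nonneg (neg_nonpos.2 hc) ha.le)
          linarith [mul_nonneg hb.le hmb]
      _ = -c * ma := by field_simp
      _ ≤ x * (P + a * ma + b * mb) := by rw [hx]; linarith [mul_nonneg hd hmb]
  · refine le_of_mul_le_mul_right ?_ hD
    calc x * (P + a * ma + b * mb)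
        ≤ d * mb := by rw [hx]; linarith [mul_nonneg hc hma]
      _ = d / b * (b * mb) := by field_simp
      _ ≤ d / b * (P + a * ma + b * mb) := by
          apply mul_le_mul_of_nonneg_left _ (div_nonneg hd hb.le)
          linarith [mul_nonneg ha.le hma]

theorem hasDerivAt_rpow_affine_mul {h : ℝ → ℝ} {h' K k l γ v : ℝ} (hh : HasDerivAt h h' v)
    (hK : K + (k * h v + l * v) ≠ 0) :
    HasDerivAt (fun t => (K + (k * h t + l * t)) ^ γ * h t)
      (γ * (K + (k * h v + l * v)) ^ (γ - 1) * (k * h' + l) * h v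
        + (K + (k * h v + l * v)) ^ γ * h') v := by
  have hbase : HasDerivAt (fun t => K + (k * h t + l * t)) (k * h' + l) v := by
    simpa using ((hh.const_mul k).add ((hasDerivAt_id v).const_mul l)).const_add K
  exact ((hbase.rpow_const (p := γ) (Or.inl hK)).mul hh).congr_deriv (by ring)

theorem mul_eq_of_hasDerivAt_of_eventually_eq_zero {g : ℝ → ℝ} {x u v α β A B a' b' c' d' : ℝ}
    (hg : HasDerivAt g x v)
    (hzero : ∀ᶠ t in 𝓝 v,
      (B + (b' * (u - g t) + d' * t)) ^ β * (u - g t) - (A + (a' * g t + c' * t)) ^ α * g t = 0)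
    (hA : A + (a' * g v + c' * v) ≠ 0) (hB : B + (b' * (u - g v) + d' * v) ≠ 0) :
    x * ((B + (b' * (u - g v) + d' * v)) ^ β + (A + (a' * g v + c' * v)) ^ α
        + a' * (α * (A + (a' * g v + c' * v)) ^ (α - 1) * g v)
        + b' * (β * (B + (b' * (u - g v) + d' * v)) ^ (β - 1) * (u - g v)))
      = d' * (β * (B + (b' * (u - g v) + d' * v)) ^ (β - 1) * (u - g v))
        - c' * (α * (A + (a' * g v + c' * v)) ^ (α - 1) * g v) := by
  have hF := (hasDerivAt_rpow_affine_mul (γ := β) (hg.const_sub u) hB).sub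
    (hasDerivAt_rpow_affine_mul (γ := α) hg hA)
  have h0 := hF.unique ((hasDerivAt_const v (0 : ℝ)).congr_of_eventuallyEq hzero)
  linear_combination -h0

theorem slow_manifold_v_derivative_bounds_general (α β A B a' b' c' d' : ℝ)
    (hα : 0 < α) (hβ : 0 < β) (hA : 0 < A) (hB : 0 ≤ B)
    (ha' : 0 < a') (hb' : 0 < b') (hc' : 0 ≤ c') (hd' : 0 ≤ d')
    (q : ℝ → ℝ → ℝ → ℝ)
    (hq : ∀ u_a u_b v, q u_a u_b v =
      (B + (b' * u_b + d' * v)) ^ β * u_b - (A + (a' * u_a + c' * v)) ^ α * u_a)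
    (ua' ub' : ℝ × ℝ → ℝ)
    -- (ua*, ub*) is the slow-manifold solution map
    (hsol : ∀ p : ℝ × ℝ, 0 ≤ p.1 → 0 ≤ p.2 →
      0 ≤ ua' p ∧ 0 ≤ ub' p ∧ ua' p + ub' p = p.1 ∧ q (ua' p) (ub' p) p.2 = 0)
    (hreg : ContDiffOn ℝ 1 ua' (Set.Ioi 0 ×ˢ Set.Ioi 0) ∧
            ContDiffOn ℝ 1 ub' (Set.Ioi 0 ×ˢ Set.Ioi 0)) :
    ∀ u v : ℝ, 0 < u → 0 < v →
      -c' / a' ≤ deriv (fun t => ua' (u, t)) v ∧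
      deriv (fun t => ua' (u, t)) v = -deriv (fun t => ub' (u, t)) v ∧
      deriv (fun t => ua' (u, t)) v ≤ d' / b' := by
  intro u v hu hv
  have hub_eq : ∀ᶠ t in 𝓝 v, ub' (u, t) = u - ua' (u, t) :=
    (eventually_gt_nhds hv).mono fun t ht => by linarith [(hsol (u, t) hu.le ht.le).2.2.1]
  have hzero : ∀ᶠ t in 𝓝 v, q (ua' (u, t)) (u - ua' (u, t)) t = 0 :=
    (eventually_gt_nhds hv).mp <| hub_eq.mono fun t h ht => h ▸ (hsol (u, t) hu.le ht.le).2.2.2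
  obtain ⟨hua, hub, -, hq0⟩ := hsol (u, v) hu.le hv.le
  rw [hq, hub_eq.self_of_nhds] at hq0
  rw [hub_eq.self_of_nhds] at hub
  -- if `u_b* = 0` then `u_a* = u > 0` and `q < 0`
  have hub_pos : 0 < u - ua' (u, v) := by
    by_contra! h
    have hsa : 0 < A + (a' * ua' (u, v) + c' * v) := by positivity
    have hqa := mul_pos (rpow_pos_of_pos hsa α) (show 0 < ua' (u, v) by linarith)
    rw [show u - ua' (u, v) = 0 by linarith, mul_zero, zero_sub, neg_eq_zero] at hq0
    linarith
  have hmem : Set.Ioi 0 ×ˢ Set.Ioi 0 ∈ 𝓝 (u, v) :=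
    (isOpen_Ioi.prod isOpen_Ioi).mem_nhds (Set.mk_mem_prod hu hv)
  have hx : HasDerivAt (fun t => ua' (u, t)) (deriv (fun t => ua' (u, t)) v) v :=
    (((hreg.1.contDiffAt hmem).differentiableAt one_ne_zero).comp v
      ((differentiableAt_const u).prodMk differentiableAt_id)).hasDerivAt
  have key := mul_eq_of_hasDerivAt_of_eventually_eq_zero hx (by simpa only [hq] using hzero)
    (by positivity) (by positivity)
  obtain ⟨hlow, hupp⟩ := neg_div_le_and_le_div_of_mul_eq ha' hb' hc' hd' (by positivity)
    (by positivity) (by positivity) key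
  exact ⟨hlow, by rw [((hx.const_sub u).congr_of_eventuallyEq hub_eq).deriv, neg_neg], hupp⟩

theorem slow_manifold_v_derivative_bounds (α β A B a' b' c' d' : ℝ)
    (hα : 0 < α) (hβ : 0 < β) (hA : 0 < A) (hB : 0 ≤ B) (hBβ : β < 1 → 0 < B)
    (ha' : 0 < a') (hb' : 0 < b') (hc' : 0 ≤ c') (hd' : 0 ≤ d')
    (q : ℝ → ℝ → ℝ → ℝ)
    (hq : ∀ u_a u_b v, q u_a u_b v =
      (B + (b' * u_b + d' * v)) ^ β * u_b - (A + (a' * u_a + c' * v)) ^ α * u_a)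
    (ua' ub' : ℝ × ℝ → ℝ)
    -- (ua*, ub*) is the slow-manifold solution map
    (hsol : ∀ p : ℝ × ℝ, 0 ≤ p.1 → 0 ≤ p.2 →
      0 ≤ ua' p ∧ 0 ≤ ub' p ∧ ua' p + ub' p = p.1 ∧ q (ua' p) (ub' p) p.2 = 0)
    (hreg : ContDiffOn ℝ 1 ua' (Set.Ioi 0 ×ˢ Set.Ioi 0) ∧
            ContDiffOn ℝ 1 ub' (Set.Ioi 0 ×ˢ Set.Ioi 0)) :
    ∀ u v : ℝ, 0 < u → 0 < v →
      -c' / a' ≤ deriv (fun t => ua' (u, t)) v ∧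
      deriv (fun t => ua' (u, t)) v = -deriv (fun t => ub' (u, t)) v ∧
      deriv (fun t => ua' (u, t)) v ≤ d' / b' :=
  slow_manifold_v_derivative_bounds_general α β A B a' b' c' d' hα hβ hA hB ha' hb' hc' hd' q hq ua'
    ub' hsol hreg
end

section
/- Let α, β > 0, A, B > 0, a', b', c', d' ≥ 0, ψ(x) = (A+x)^α, φ(x) = (B+x)^β, Λ(u_a,u_b,v) = φ(b'u_b + d'v) + ψ(a'u_a + c'v), Q = (φ(b'u_b+d'v)u_b - ψ(a'u_a+c'v)u_a)/Λ. Then for every M > 0 and all (u_a,u_b,v) ∈ [0,M]³: ∂₁Q(u_a,u_b,v) < 0 and |∂₁Q(u_a,u_b,v)| ≤ 1 + α + a' M α / A. -/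
/-!
Write `ψ(t) = (A + a' t + c' v)^α` and `φ` for the (constant in `u_a`) other weight. The quotient rule
gives `∂₁Q = -ψ/Λ - ψ' φ (u_a + u_b)/Λ²`, a negative term plus a nonpositive one. For the bound,
`ψ/Λ ≤ 1` and `φ/Λ² ≤ 1/ψ`, so `|∂₁Q| ≤ 1 + (ψ'/ψ)(u_a + u_b)`, and the logarithmic derivative
`ψ'/ψ = α a'/(A + a' u_a + c' v)` contributes at most `α` against `u_a` and `α a' M / A` against `u_b`.
-/

open Real

theorem hasDerivAt_rpow_const_add_mul {α A a c u : ℝ} (h : 0 < A + (a * u + c)) :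
    HasDerivAt (fun t => (A + (a * t + c)) ^ α)
      (α * a * (A + (a * u + c)) ^ α / (A + (a * u + c))) u := by
  have hlin : HasDerivAt (fun t => A + (a * t + c)) a u := by
    simpa using (((hasDerivAt_id u).const_mul a).add_const c).const_add A
  refine ((hasDerivAt_rpow_const (p := α) (Or.inl h.ne')).comp u hlin).congr_deriv ?_
  rw [rpow_sub_one h.ne']
  ring

/-- `quotientDeriv (f t) G (f' t) (t + w)` is the derivative of
`t ↦ (G * w - f t * t) / (G + f t)`. -/
noncomputable def quotientDeriv (F G s x : ℝ) : ℝ := -(F / (G + F)) - s * G * x / (G + F) ^ 2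

theorem hasDerivAt_mul_sub_mul_div_add {f : ℝ → ℝ} {s G w t : ℝ} (hf : HasDerivAt f s t)
    (hden : G + f t ≠ 0) :
    HasDerivAt (fun t => (G * w - f t * t) / (G + f t)) (quotientDeriv (f t) G s (t + w)) t := by
  refine (((hasDerivAt_const t (G * w)).sub (hf.mul (hasDerivAt_id t))).div
    (hf.const_add G) hden).congr_deriv ?_
  simp only [quotientDeriv, Pi.sub_apply, Pi.mul_apply, id]
  field_simp
  ring

theorem quotientDeriv_neg {F G s x : ℝ} (hF : 0 < F) (hG : 0 < G) (hs : 0 ≤ s) (hx : 0 ≤ x) :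
    quotientDeriv F G s x < 0 := by
  have : 0 < F / (G + F) := by positivity
  have : 0 ≤ s * G * x / (G + F) ^ 2 := by positivity
  unfold quotientDeriv
  linarith

theorem abs_quotientDeriv_le {F G s x : ℝ} (hF : 0 < F) (hG : 0 < G) (hs : 0 ≤ s) (hx : 0 ≤ x) :
    |quotientDeriv F G s x| ≤ 1 + s * x / F := by
  have hfrac : F / (G + F) ≤ 1 := (div_le_one (by positivity)).2 (by linarith)
  have hcorr : s * G * x / (G + F) ^ 2 ≤ s * x / F := by
    rw [div_le_div_iff₀ (by positivity) hF]
    calc s * G * x * F = s * x * (G * F) := by ring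
      _ ≤ s * x * (G + F) ^ 2 := by gcongr; nlinarith
  rw [abs_of_neg (quotientDeriv_neg hF hG hs hx), quotientDeriv]
  linarith

theorem mul_add_div_const_add_mul_le {α A a c t w M : ℝ} (hα : 0 ≤ α) (hA : 0 < A) (ha : 0 ≤ a)
    (hc : 0 ≤ c) (ht : 0 ≤ t) (hw : 0 ≤ w) (hwM : w ≤ M) :
    α * a * (t + w) / (A + (a * t + c)) ≤ α + a * M * α / A := by
  have hAt : 0 < A + (a * t + c) := by positivity
  rw [mul_add, add_div]
  refine add_le_add ?_ ?_
  · rw [div_le_iff₀ hAt]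
    nlinarith [mul_nonneg hα (mul_nonneg ha ht)]
  · calc α * a * w / (A + (a * t + c)) ≤ α * a * w / A := by
          gcongr
          nlinarith [mul_nonneg ha ht]
      _ ≤ a * M * α / A := by
          rw [show a * M * α = α * a * M by ring]
          gcongr

theorem partial1Q_bounds_general (α β A B a' b' c' d' : ℝ)
    (hα : 0 < α) (hA : 0 < A) (hB : 0 < B)
    (ha' : 0 ≤ a') (hb' : 0 ≤ b') (hc' : 0 ≤ c') (hd' : 0 ≤ d')
    (Q : ℝ → ℝ → ℝ → ℝ)
    (hQ : ∀ u_a u_b v, Q u_a u_b v =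
      ((B + (b' * u_b + d' * v)) ^ β * u_b - (A + (a' * u_a + c' * v)) ^ α * u_a) /
        ((B + (b' * u_b + d' * v)) ^ β + (A + (a' * u_a + c' * v)) ^ α)) :
    ∀ M : ℝ, 0 < M → ∀ u_a u_b v : ℝ,
      u_a ∈ Set.Icc 0 M → u_b ∈ Set.Icc 0 M → v ∈ Set.Icc 0 M →
      deriv (fun t => Q t u_b v) u_a < 0 ∧
      |deriv (fun t => Q t u_b v) u_a| ≤ 1 + α + a' * M * α / A := by
  rintro M - u_a u_b v ⟨hua, -⟩ ⟨hub, hubM⟩ ⟨hv, -⟩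
  have hAx : 0 < A + (a' * u_a + c' * v) := by positivity
  set F := (A + (a' * u_a + c' * v)) ^ α
  set G := (B + (b' * u_b + d' * v)) ^ β
  set s := α * a' * F / (A + (a' * u_a + c' * v))
  have hF : 0 < F := rpow_pos_of_pos hAx α
  have hG : 0 < G := rpow_pos_of_pos (by positivity) β
  have hs : 0 ≤ s := by positivity
  have hx : 0 ≤ u_a + u_b := by positivity
  have hderiv : deriv (fun t => Q t u_b v) u_a = quotientDeriv F G s (u_a + u_b) := by
    simp only [hQ]
    exact (hasDerivAt_mul_sub_mul_div_add (hasDerivAt_rpow_const_add_mul hAx)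
      (by positivity)).deriv
  have hsx : s * (u_a + u_b) / F ≤ α + a' * M * α / A := by
    calc s * (u_a + u_b) / F = α * a' * (u_a + u_b) / (A + (a' * u_a + c' * v)) := by
          simp only [s]
          field_simp
      _ ≤ α + a' * M * α / A :=
          mul_add_div_const_add_mul_le hα.le hA ha' (by positivity) hua hub hubM
  rw [hderiv]
  refine ⟨quotientDeriv_neg hF hG hs hx, ?_⟩
  linarith [abs_quotientDeriv_le hF hG hs hx]

theorem partial1Q_bounds (α β A B a' b' c' d' : ℝ)
    (hα : 0 < α) (hβ : 0 < β) (hA : 0 < A) (hB : 0 < B)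
    (ha' : 0 ≤ a') (hb' : 0 ≤ b') (hc' : 0 ≤ c') (hd' : 0 ≤ d')
    (Q : ℝ → ℝ → ℝ → ℝ)
    (hQ : ∀ u_a u_b v, Q u_a u_b v =
      ((B + (b' * u_b + d' * v)) ^ β * u_b - (A + (a' * u_a + c' * v)) ^ α * u_a) /
        ((B + (b' * u_b + d' * v)) ^ β + (A + (a' * u_a + c' * v)) ^ α)) :
    ∀ M : ℝ, 0 < M → ∀ u_a u_b v : ℝ,
      u_a ∈ Set.Icc 0 M → u_b ∈ Set.Icc 0 M → v ∈ Set.Icc 0 M →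
      deriv (fun t => Q t u_b v) u_a < 0 ∧
      |deriv (fun t => Q t u_b v) u_a| ≤ 1 + α + a' * M * α / A :=
  partial1Q_bounds_general α β A B a' b' c' d' hα hA hB ha' hb' hc' hd' Q hQ
end

section
/- With Q as above (α, β > 0, A > 0, B ≥ 0, power-law ψ, φ, Λ = ψ + φ ≥ A^α > 0), define Q̃(u, u_b, v) = Q(u - u_b, u_b, v) for 0 ≤ u_b ≤ u. Then ∂_{u_b} Q̃(u, u_b, v) = -∂₁Q(u-u_b, u_b, v) + ∂₂Q(u-u_b, u_b, v) ≥ 1 for all admissible (u, u_b, v). Consequently, if u_b, u_b' ∈ [0, u] and Q̃(u, u_b', v) = 0, then |u_b - u_b'| ≤ |Q̃(u, u_b, v)|. -/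
/-!
For fixed `v`, `Q(x, y) = (ψ y * y - φ x * x) / Λ` with the power laws `ψ`, `φ` and
`Λ = ψ y + φ x`. Differentiating the quotient, the terms carrying `ψ'` and `φ'` collapse to
`ψ' y * φ x * (x + y) / Λ²` and `φ' x * ψ y * (x + y) / Λ²`, both nonnegative, so along the
antidiagonal `t ↦ Q(u - t, t)` the derivative is at least `(ψ + φ) / Λ = 1`. A function whose
derivative is at least `1` on an interval moves at least as far as its argument, which gives the
distance bound to a zero.
-/

open Set

section NormalizedFlux

variable {ψ φ : ℝ → ℝ}

noncomputable def normalizedFlux (ψ φ : ℝ → ℝ) (x y : ℝ) : ℝ :=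
  (ψ y * y - φ x * x) / (ψ y + φ x)

noncomputable def normalizedFluxDerivFst (ψ φ φ' : ℝ → ℝ) (x y : ℝ) : ℝ :=
  -(φ x / (ψ y + φ x) + φ' x * ψ y * (x + y) / (ψ y + φ x) ^ 2)

noncomputable def normalizedFluxDerivSnd (ψ φ ψ' : ℝ → ℝ) (x y : ℝ) : ℝ :=
  ψ y / (ψ y + φ x) + ψ' y * φ x * (x + y) / (ψ y + φ x) ^ 2

theorem hasDerivAt_normalizedFlux_fst {φ' : ℝ → ℝ} {x y : ℝ} (hφ : HasDerivAt φ (φ' x) x)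
    (hΛ : ψ y + φ x ≠ 0) :
    HasDerivAt (fun x => normalizedFlux ψ φ x y) (normalizedFluxDerivFst ψ φ φ' x y) x := by
  have h := ((hasDerivAt_const x (ψ y * y)).sub (hφ.mul (hasDerivAt_id' x))).div
    ((hasDerivAt_const x (ψ y)).add hφ) hΛ
  refine h.congr_deriv ?_
  simp only [normalizedFluxDerivFst, Pi.add_apply, Pi.sub_apply, Pi.mul_apply]
  field_simp
  ring

theorem hasDerivAt_normalizedFlux_snd {ψ' : ℝ → ℝ} {x y : ℝ} (hψ : HasDerivAt ψ (ψ' y) y)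
    (hΛ : ψ y + φ x ≠ 0) :
    HasDerivAt (normalizedFlux ψ φ x) (normalizedFluxDerivSnd ψ φ ψ' x y) y := by
  have h := ((hψ.mul (hasDerivAt_id' y)).sub (hasDerivAt_const y (φ x * x))).div
    (hψ.add (hasDerivAt_const y (φ x))) hΛ
  refine h.congr_deriv ?_
  simp only [normalizedFluxDerivSnd, Pi.add_apply, Pi.sub_apply, Pi.mul_apply]
  field_simp
  ring

theorem hasDerivAt_normalizedFlux_antidiagonal {ψ' φ' : ℝ → ℝ} {u t : ℝ}
    (hψ : HasDerivAt ψ (ψ' t) t) (hφ : HasDerivAt φ (φ' (u - t)) (u - t))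
    (hΛ : ψ t + φ (u - t) ≠ 0) :
    HasDerivAt (fun s => normalizedFlux ψ φ (u - s) s)
      (-normalizedFluxDerivFst ψ φ φ' (u - t) t + normalizedFluxDerivSnd ψ φ ψ' (u - t) t) t := by
  have hsub : HasDerivAt (fun s => u - s) (-1) t := (hasDerivAt_id' t).const_sub u
  have hφ' : HasDerivAt (fun s => φ (u - s)) (φ' (u - t) * -1) t := hφ.comp t hsub
  have h := ((hψ.mul (hasDerivAt_id' t)).sub (hφ'.mul hsub)).div (hψ.add hφ') hΛ
  refine h.congr_deriv ?_
  simp only [normalizedFluxDerivFst, normalizedFluxDerivSnd, Pi.add_apply, Pi.sub_apply,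
    Pi.mul_apply]
  field_simp
  ring

theorem one_le_neg_normalizedFluxDerivFst_add_normalizedFluxDerivSnd {ψ' φ' : ℝ → ℝ} {x y : ℝ}
    (hψ : 0 ≤ ψ y) (hφ : 0 ≤ φ x) (hΛ : 0 < ψ y + φ x) (hψ' : 0 ≤ ψ' y) (hφ' : 0 ≤ φ' x)
    (hxy : 0 ≤ x + y) :
    1 ≤ -normalizedFluxDerivFst ψ φ φ' x y + normalizedFluxDerivSnd ψ φ ψ' x y := by
  have hsum : φ x / (ψ y + φ x) + ψ y / (ψ y + φ x) = 1 := by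
    rw [← add_div, add_comm, div_self hΛ.ne']
  have hfst : 0 ≤ φ' x * ψ y * (x + y) / (ψ y + φ x) ^ 2 := by positivity
  have hsnd : 0 ≤ ψ' y * φ x * (x + y) / (ψ y + φ x) ^ 2 := by positivity
  simp only [normalizedFluxDerivFst, normalizedFluxDerivSnd]
  linarith

theorem hasDerivAt_normalizedFlux_antidiagonal_of_mem_Icc {ψ' φ' : ℝ → ℝ}
    (hψ : ∀ y, 0 ≤ y → HasDerivAt ψ (ψ' y) y ∧ 0 ≤ ψ y ∧ 0 ≤ ψ' y)
    (hφ : ∀ x, 0 ≤ x → HasDerivAt φ (φ' x) x ∧ 0 < φ x ∧ 0 ≤ φ' x) {u t : ℝ} (ht : t ∈ Icc 0 u) :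
    HasDerivAt (fun s => normalizedFlux ψ φ (u - s) s)
      (-normalizedFluxDerivFst ψ φ φ' (u - t) t + normalizedFluxDerivSnd ψ φ ψ' (u - t) t) t := by
  obtain ⟨hψt, hψ0, -⟩ := hψ t ht.1
  obtain ⟨hφt, hφ0, -⟩ := hφ (u - t) (sub_nonneg.2 ht.2)
  exact hasDerivAt_normalizedFlux_antidiagonal hψt hφt (by positivity)

theorem one_le_neg_normalizedFluxDerivFst_add_normalizedFluxDerivSnd_of_mem_Icc {ψ' φ' : ℝ → ℝ}
    (hψ : ∀ y, 0 ≤ y → HasDerivAt ψ (ψ' y) y ∧ 0 ≤ ψ y ∧ 0 ≤ ψ' y)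
    (hφ : ∀ x, 0 ≤ x → HasDerivAt φ (φ' x) x ∧ 0 < φ x ∧ 0 ≤ φ' x) {u t : ℝ} (ht : t ∈ Icc 0 u) :
    1 ≤ -normalizedFluxDerivFst ψ φ φ' (u - t) t + normalizedFluxDerivSnd ψ φ ψ' (u - t) t := by
  obtain ⟨-, hψ0, hψ'0⟩ := hψ t ht.1
  obtain ⟨-, hφ0, hφ'0⟩ := hφ (u - t) (sub_nonneg.2 ht.2)
  exact one_le_neg_normalizedFluxDerivFst_add_normalizedFluxDerivSnd hψ0 hφ0.le (by positivity)
    hψ'0 hφ'0 (by linarith [ht.1, ht.2])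

end NormalizedFlux

theorem abs_sub_le_abs_sub_of_one_le_deriv {f f' : ℝ → ℝ} {s : Set ℝ} (hs : Convex ℝ s)
    (hf : ∀ x ∈ s, HasDerivAt f (f' x) x) (hf' : ∀ x ∈ s, 1 ≤ f' x) {x y : ℝ}
    (hx : x ∈ s) (hy : y ∈ s) : |x - y| ≤ |f x - f y| := by
  wlog hxy : x ≤ y generalizing x y
  · rw [abs_sub_comm, abs_sub_comm (f x)]
    exact this hy hx (le_of_not_ge hxy)
  have hmono := hs.mul_sub_le_image_sub_of_le_deriv
    (fun z hz => (hf z hz).continuousAt.continuousWithinAt)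
    (fun z hz => (hf z (interior_subset hz)).differentiableAt.differentiableWithinAt)
    (fun z hz => (hf z (interior_subset hz)).deriv ▸ hf' z (interior_subset hz)) x hx y hy hxy
  rw [abs_of_nonpos (by linarith), abs_of_nonpos (by linarith)]
  linarith

theorem hasDerivAt_rpow_affine {c m k p x : ℝ} (h : c + (m * x + k) ≠ 0 ∨ 1 ≤ p) :
    HasDerivAt (fun x => (c + (m * x + k)) ^ p) (p * (c + (m * x + k)) ^ (p - 1) * m) x := by
  have hlin : HasDerivAt (fun x => c + (m * x + k)) m x := by
    simpa using (((hasDerivAt_id' x).const_mul m).add_const k).const_add c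
  exact (Real.hasDerivAt_rpow_const h).comp x hlin

theorem Qtilde_derivative_and_distance (α β A B a' b' c' d' : ℝ)
    (hα : 0 < α) (hβ : 0 < β) (hA : 0 < A) (hB : 0 ≤ B) (hBβ : β < 1 → 0 < B)
    (ha' : 0 ≤ a') (hb' : 0 ≤ b') (hc' : 0 ≤ c') (hd' : 0 ≤ d')
    (Q : ℝ → ℝ → ℝ → ℝ)
    (hQ : ∀ u_a u_b v, Q u_a u_b v =
      ((B + (b' * u_b + d' * v)) ^ β * u_b - (A + (a' * u_a + c' * v)) ^ α * u_a) /
        ((B + (b' * u_b + d' * v)) ^ β + (A + (a' * u_a + c' * v)) ^ α)) :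
    ∀ u u_b v : ℝ, 0 ≤ u_b → u_b ≤ u → 0 ≤ v →
      (deriv (fun t => Q (u - t) t v) u_b
        = -(deriv (fun s => Q s u_b v) (u - u_b))
          + deriv (fun t => Q (u - u_b) t v) u_b ∧
       1 ≤ deriv (fun t => Q (u - t) t v) u_b) ∧
      (∀ u_b' : ℝ, u_b' ∈ Set.Icc 0 u → Q (u - u_b') u_b' v = 0 →
        |u_b - u_b'| ≤ |Q (u - u_b) u_b v|) := by
  intro u t v ht htu hv
  set ψ : ℝ → ℝ := fun y => (B + (b' * y + d' * v)) ^ β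
  set φ : ℝ → ℝ := fun x => (A + (a' * x + c' * v)) ^ α
  set ψ' : ℝ → ℝ := fun y => β * (B + (b' * y + d' * v)) ^ (β - 1) * b'
  set φ' : ℝ → ℝ := fun x => α * (A + (a' * x + c' * v)) ^ (α - 1) * a'
  have hQv : ∀ x y, Q x y v = normalizedFlux ψ φ x y := fun x y => hQ x y v
  have hψ : ∀ y, 0 ≤ y → HasDerivAt ψ (ψ' y) y ∧ 0 ≤ ψ y ∧ 0 ≤ ψ' y := fun y hy => by
    have hbase : 0 ≤ B + (b' * y + d' * v) := by positivity
    refine ⟨hasDerivAt_rpow_affine ?_, by positivity, by positivity⟩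
    rcases lt_or_ge β 1 with hβ1 | hβ1
    · exact Or.inl (by have := hBβ hβ1; positivity)
    · exact Or.inr hβ1
  have hφ : ∀ x, 0 ≤ x → HasDerivAt φ (φ' x) x ∧ 0 < φ x ∧ 0 ≤ φ' x := fun x hx => by
    have hbase : 0 < A + (a' * x + c' * v) := by positivity
    exact ⟨hasDerivAt_rpow_affine (Or.inl hbase.ne'), by positivity, by positivity⟩
  have hΛ : ψ t + φ (u - t) ≠ 0 :=
    (add_pos_of_nonneg_of_pos (hψ t ht).2.1 (hφ (u - t) (sub_nonneg.2 htu)).2.1).ne'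
  have hmem : t ∈ Icc 0 u := ⟨ht, htu⟩
  have hderiv := fun s (hs : s ∈ Icc 0 u) =>
    hasDerivAt_normalizedFlux_antidiagonal_of_mem_Icc hψ hφ hs
  have hderiv_ge := fun s (hs : s ∈ Icc 0 u) =>
    one_le_neg_normalizedFluxDerivFst_add_normalizedFluxDerivSnd_of_mem_Icc hψ hφ hs
  simp only [hQv]
  refine ⟨⟨?_, ?_⟩, fun t' hmem' h0 => ?_⟩
  · rw [(hderiv t hmem).deriv, (hasDerivAt_normalizedFlux_fst (hφ _ (sub_nonneg.2 htu)).1 hΛ).deriv,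
      (hasDerivAt_normalizedFlux_snd (hψ t ht).1 hΛ).deriv]
  · rw [(hderiv t hmem).deriv]
    exact hderiv_ge t hmem
  · simpa only [h0, sub_zero] using abs_sub_le_abs_sub_of_one_le_deriv (convex_Icc 0 u) hderiv
      hderiv_ge hmem hmem'
end
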